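/- Let p : Fin 4 → ℝ² be a quadrilateral in general position with Q-value Q. Then Q = 0 if and only if the quadrilateral is self-intersecting, i.e. a pair of opposite open edges intersects: openSegment ℝ (p 0) (p 1) ∩ openSegment ℝ (p 2) (p 3) ≠ ∅ or openSegment ℝ (p 1) (p 2) ∩ openSegment ℝ (p 3) (p 0) ≠ ∅. -/
import Mathlib


/-- The cross value of three points in the plane: the z-coordinate of the
cross product `(b - a) × (c - b)`. -/
noncomputable def cross (a b c : ℝ × ℝ) : ℝ :=
  (b.1 - a.1) * (c.2 - b.2) - (b.2 - a.2) * (c.1 - b.1)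

/-- A quadrilateral `p : Fin 4 → ℝ²` is in general position if no three of its
four points are collinear. -/
def GeneralPosition (p : Fin 4 → ℝ × ℝ) : Prop :=
  ∀ i j k : Fin 4, i ≠ j → i ≠ k → j ≠ k → cross (p i) (p j) (p k) ≠ 0

/-- The Q-value of a quadrilateral: `|∑ i, sgn (cross (p (i-1)) (p i) (p (i+1)))|`. -/
noncomputable def Qvalue (p : Fin 4 → ℝ × ℝ) : ℝ :=
  |∑ i : Fin 4, Real.sign (cross (p (i - 1)) (p i) (p (i + 1)))|
lemma cross_affine (a b u v : ℝ × ℝ) (t : ℝ) :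
    cross a b ((1 - t) • u + t • v) = (1 - t) * cross a b u + t * cross a b v := by
  simp only [cross, Prod.fst_add, Prod.snd_add, Prod.smul_fst, Prod.smul_snd, smul_eq_mul]
  ring

lemma cross_self_left (a b : ℝ × ℝ) : cross a b a = 0 := by simp only [cross]; ring

lemma cross_self_right (a b : ℝ × ℝ) : cross a b b = 0 := by simp only [cross]; ring

lemma line_param (c d x : ℝ × ℝ) (hcd : c ≠ d) (h : cross c d x = 0) :
    ∃ s : ℝ, x = (1 - s) • c + s • d := by
  have hdet : (d.1 - c.1) * (x.2 - c.2) - (d.2 - c.2) * (x.1 - c.1) = 0 := by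
    have e : (d.1 - c.1) * (x.2 - c.2) - (d.2 - c.2) * (x.1 - c.1) = cross c d x := by
      simp only [cross]; ring
    rw [e, h]
  by_cases h1 : d.1 - c.1 = 0
  · have h2 : d.2 - c.2 ≠ 0 := by
      intro h2
      exact hcd (Prod.ext (by linarith) (by linarith)).symm
    refine ⟨(x.2 - c.2) / (d.2 - c.2), ?_⟩
    have hx1 : x.1 = c.1 := by
      have h3 : (d.2 - c.2) * (x.1 - c.1) = 0 := by linear_combination (-1 : ℝ) * hdet + (x.2 - c.2) * h1
      rcases mul_eq_zero.mp h3 with h' | h'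
      · exact absurd h' h2
      · linarith
    refine Prod.ext ?_ ?_ <;>
      simp only [Prod.fst_add, Prod.snd_add, Prod.smul_fst, Prod.smul_snd, smul_eq_mul]
    · rw [hx1]; field_simp; linear_combination (c.2 - x.2) * h1
    · field_simp; ring
  · refine ⟨(x.1 - c.1) / (d.1 - c.1), ?_⟩
    refine Prod.ext ?_ ?_ <;>
      simp only [Prod.fst_add, Prod.snd_add, Prod.smul_fst, Prod.smul_snd, smul_eq_mul]
    · field_simp; ring
    · field_simp
      linear_combination hdet


lemma mem_openSegment_iff (a b x : ℝ × ℝ) :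
    x ∈ openSegment ℝ a b ↔ ∃ t : ℝ, 0 < t ∧ t < 1 ∧ x = (1 - t) • a + t • b := by
  rw [openSegment_eq_image]
  constructor
  · rintro ⟨t, ⟨ht0, ht1⟩, rfl⟩; exact ⟨t, ht0, ht1, rfl⟩
  · rintro ⟨t, ht0, ht1, rfl⟩; exact ⟨t, ⟨ht0, ht1⟩, rfl⟩

lemma seg_inter_iff (a b c d : ℝ × ℝ) (hA : cross a b c ≠ 0) (hA' : cross a b d ≠ 0)
    (hB : cross c d a ≠ 0) (hB' : cross c d b ≠ 0) :
    (openSegment ℝ a b ∩ openSegment ℝ c d).Nonempty ↔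
      cross a b c * cross a b d < 0 ∧ cross c d a * cross c d b < 0 := by
  set A := cross a b c with hAdef
  set A' := cross a b d with hA'def
  set B := cross c d a with hBdef
  set B' := cross c d b with hB'def
  constructor
  · rintro ⟨x, hx1, hx2⟩
    rw [mem_openSegment_iff] at hx1 hx2
    obtain ⟨t, ht0, ht1, hxt⟩ := hx1
    obtain ⟨s, hs0, hs1, hxs⟩ := hx2
    have habx : cross a b x = 0 := by
      rw [hxt, cross_affine, cross_self_left, cross_self_right]; ring
    have hcdx : cross c d x = 0 := by
      rw [hxs, cross_affine, cross_self_left, cross_self_right]; ring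
    have e1 : (1 - s) * A + s * A' = 0 := by
      rw [hAdef, hA'def, ← cross_affine, ← hxs, habx]
    have e2 : (1 - t) * B + t * B' = 0 := by
      rw [hBdef, hB'def, ← cross_affine, ← hxt, hcdx]
    constructor
    · have hA2 : 0 < A ^ 2 := by positivity
      have key : s * (A * A') = -(1 - s) * A ^ 2 := by linear_combination A * e1
      nlinarith [key, hs0, hs1, hA2]
    · have hB2 : 0 < B ^ 2 := by positivity
      have key : t * (B * B') = -(1 - t) * B ^ 2 := by linear_combination B * e2
      nlinarith [key, ht0, ht1, hB2]
  · rintro ⟨hAA, hBB⟩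
    have hBne : B - B' ≠ 0 := by
      intro h
      have : B = B' := by linarith
      rw [this] at hBB
      nlinarith [hBB]
    set t := B / (B - B') with htdef
    have ht0 : 0 < t := by
      rcases lt_or_gt_of_ne hB with hBneg | hBpos
      · have hB'pos : 0 < B' := by nlinarith
        apply div_pos_of_neg_of_neg hBneg; linarith
      · have hB'neg : B' < 0 := by nlinarith
        apply div_pos hBpos; linarith
    have ht1 : t < 1 := by
      rw [htdef, div_lt_one_iff]
      rcases lt_or_gt_of_ne hB with hBneg | hBpos
      · have hB'pos : 0 < B' := by nlinarith
        right; right; constructor <;> linarith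
      · have hB'neg : B' < 0 := by nlinarith
        left; constructor <;> linarith
    set x := (1 - t) • a + t • b with hxdef
    have hxab : x ∈ openSegment ℝ a b := (mem_openSegment_iff a b x).mpr ⟨t, ht0, ht1, rfl⟩
    have hcdx : cross c d x = 0 := by
      rw [hxdef, cross_affine, ← hBdef, ← hB'def, htdef]
      field_simp
      ring
    have hcd : c ≠ d := by
      rintro rfl
      apply hB
      rw [hBdef]
      simp only [cross]; ring
    obtain ⟨s, hxs⟩ := line_param c d x hcd hcdx
    have e1 : (1 - s) * A + s * A' = 0 := by
      rw [hAdef, hA'def, ← cross_affine, ← hxs]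
      rw [hxdef, cross_affine, cross_self_left, cross_self_right]; ring
    have hs0 : 0 < s := by
      rcases lt_or_gt_of_ne hA with hneg | hpos
      · have : 0 < A' := by nlinarith
        nlinarith [e1]
      · have : A' < 0 := by nlinarith
        nlinarith [e1]
    have hs1 : s < 1 := by
      rcases lt_or_gt_of_ne hA with hneg | hpos
      · have : 0 < A' := by nlinarith
        nlinarith [e1]
      · have : A' < 0 := by nlinarith
        nlinarith [e1]
    exact ⟨x, hxab, (mem_openSegment_iff c d x).mpr ⟨s, hs0, hs1, hxs⟩⟩

lemma sign_sum_key (v0 v1 v2 v3 : ℝ) (h0 : v0 ≠ 0) (h1 : v1 ≠ 0) (h2 : v2 ≠ 0)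
    (h3 : v3 ≠ 0) (hid : v0 + v2 = v1 + v3) :
    |Real.sign v0 + Real.sign v1 + Real.sign v2 + Real.sign v3| = 0 ↔
      ((v1 * v0 < 0 ∧ v3 * v2 < 0) ∨ (v2 * v1 < 0 ∧ v0 * v3 < 0)) := by
  have H0 : (v0 < 0 ∧ Real.sign v0 = -1) ∨ (0 < v0 ∧ Real.sign v0 = 1) :=
    h0.lt_or_gt.imp (fun h => ⟨h, Real.sign_of_neg h⟩) (fun h => ⟨h, Real.sign_of_pos h⟩)
  have H1 : (v1 < 0 ∧ Real.sign v1 = -1) ∨ (0 < v1 ∧ Real.sign v1 = 1) :=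
    h1.lt_or_gt.imp (fun h => ⟨h, Real.sign_of_neg h⟩) (fun h => ⟨h, Real.sign_of_pos h⟩)
  have H2 : (v2 < 0 ∧ Real.sign v2 = -1) ∨ (0 < v2 ∧ Real.sign v2 = 1) :=
    h2.lt_or_gt.imp (fun h => ⟨h, Real.sign_of_neg h⟩) (fun h => ⟨h, Real.sign_of_pos h⟩)
  have H3 : (v3 < 0 ∧ Real.sign v3 = -1) ∨ (0 < v3 ∧ Real.sign v3 = 1) :=
    h3.lt_or_gt.imp (fun h => ⟨h, Real.sign_of_neg h⟩) (fun h => ⟨h, Real.sign_of_pos h⟩)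
  rcases H0 with ⟨g0, e0⟩ | ⟨g0, e0⟩ <;> rcases H1 with ⟨g1, e1⟩ | ⟨g1, e1⟩ <;>
    rcases H2 with ⟨g2, e2⟩ | ⟨g2, e2⟩ <;> rcases H3 with ⟨g3, e3⟩ | ⟨g3, e3⟩ <;>
    rw [e0, e1, e2, e3] <;> norm_num <;>
    first
      | (exfalso; linarith)
      | (constructor <;> intro u <;> nlinarith)
      | exact Or.inl ⟨by nlinarith, by nlinarith⟩
      | exact Or.inr ⟨by nlinarith, by nlinarith⟩


theorem Qvalue_eq_zero_iff_selfIntersecting (p : Fin 4 → ℝ × ℝ)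
    (hp : GeneralPosition p) :
    Qvalue p = 0 ↔
      (openSegment ℝ (p 0) (p 1) ∩ openSegment ℝ (p 2) (p 3) ≠ ∅ ∨
       openSegment ℝ (p 1) (p 2) ∩ openSegment ℝ (p 3) (p 0) ≠ ∅) := by
  have hw0 : cross (p 3) (p 0) (p 1) ≠ 0 := hp 3 0 1 (by decide) (by decide) (by decide)
  have hw1 : cross (p 0) (p 1) (p 2) ≠ 0 := hp 0 1 2 (by decide) (by decide) (by decide)
  have hw2 : cross (p 1) (p 2) (p 3) ≠ 0 := hp 1 2 3 (by decide) (by decide) (by decide)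
  have hw3 : cross (p 2) (p 3) (p 0) ≠ 0 := hp 2 3 0 (by decide) (by decide) (by decide)
  have e013 : cross (p 0) (p 1) (p 3) = cross (p 3) (p 0) (p 1) := by
    simp only [cross]; ring
  have e231 : cross (p 2) (p 3) (p 1) = cross (p 1) (p 2) (p 3) := by
    simp only [cross]; ring
  have e120 : cross (p 1) (p 2) (p 0) = cross (p 0) (p 1) (p 2) := by
    simp only [cross]; ring
  have e302 : cross (p 3) (p 0) (p 2) = cross (p 2) (p 3) (p 0) := by
    simp only [cross]; ring
  have hid : cross (p 3) (p 0) (p 1) + cross (p 1) (p 2) (p 3)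
      = cross (p 0) (p 1) (p 2) + cross (p 2) (p 3) (p 0) := by
    simp only [cross]; ring
  have hQ : Qvalue p = |Real.sign (cross (p 3) (p 0) (p 1)) +
      Real.sign (cross (p 0) (p 1) (p 2)) + Real.sign (cross (p 1) (p 2) (p 3)) +
      Real.sign (cross (p 2) (p 3) (p 0))| := by
    unfold Qvalue
    rw [Fin.sum_univ_four]
    rw [show ((0 : Fin 4) - 1) = 3 by decide, show ((1 : Fin 4) - 1) = 0 by decide,
      show ((2 : Fin 4) - 1) = 1 by decide, show ((3 : Fin 4) - 1) = 2 by decide,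
      show ((0 : Fin 4) + 1) = 1 by decide, show ((1 : Fin 4) + 1) = 2 by decide,
      show ((2 : Fin 4) + 1) = 3 by decide, show ((3 : Fin 4) + 1) = 0 by decide]
  have seg1 := seg_inter_iff (p 0) (p 1) (p 2) (p 3) hw1 (e013 ▸ hw0) hw3 (e231 ▸ hw2)
  have seg2 := seg_inter_iff (p 1) (p 2) (p 3) (p 0) hw2 (e120 ▸ hw1) hw0 (e302 ▸ hw3)
  rw [e013] at seg1
  rw [e231] at seg1
  rw [e120] at seg2
  rw [e302] at seg2
  rw [hQ, ← Set.nonempty_iff_ne_empty, ← Set.nonempty_iff_ne_empty, seg1, seg2]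
  exact sign_sum_key _ _ _ _ hw0 hw1 hw2 hw3 hid
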